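/- arXiv:2504.12712 — 3 statements merged into one kernel-verified Lean document; each statement's English description precedes it below -/
import Mathlib

section
/- Let X ∈ ℝ^{d×N} be a data matrix with columns x_0,…,x_{N-1}, and suppose there exists ŵ ∈ ℝ^d with x_i^⊤ ŵ ≥ 1 for all i (joint separability, labels absorbed). Define the margin φ = min_i x_i^⊤ ŵ / ‖ŵ‖. Then for any loss function ℓ that is differentiable with ℓ' ≤ 0, and any w ∈ ℝ^d, the gradient of the total loss L(w) = Σ_i ℓ(x_i^⊤ w) satisfies ‖∇L(w)‖ ≥ φ · sqrt(Σ_i [ℓ'(x_i^⊤ w)]²). -/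
open scoped RealInnerProductSpace BigOperators

/-- Lower bound on the total-loss gradient norm via the joint margin. -/
theorem gradient_norm_lower_bound
    {d N : ℕ} (hN : 0 < N)
    (x : Fin N → EuclideanSpace ℝ (Fin d)) (what : EuclideanSpace ℝ (Fin d))
    (hsep : ∀ i, 1 ≤ ⟪x i, what⟫)
    (φ : ℝ)
    (hφ : IsGLB (Set.range fun i => ⟪x i, what⟫ / ‖what‖) φ)
    (ℓ dℓ : ℝ → ℝ)
    (hℓ : ∀ u, HasDerivAt ℓ (dℓ u) u)
    (hd : ∀ u, dℓ u ≤ 0)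
    (w : EuclideanSpace ℝ (Fin d)) :
    φ * Real.sqrt (∑ i, (dℓ ⟪x i, w⟫) ^ 2)
      ≤ ‖∑ i, dℓ ⟪x i, w⟫ • x i‖ := by
  set a : Fin N → ℝ := fun i => dℓ ⟪x i, w⟫ with ha
  have hai : ∀ i, a i ≤ 0 := fun i => hd _
  have hwhat : what ≠ 0 := by
    intro h
    have h1 := hsep ⟨0, hN⟩
    rw [h, inner_zero_right] at h1
    linarith
  have hnorm : (0:ℝ) < ‖what‖ := norm_pos_iff.mpr hwhat
  have hφ_lb : ∀ i, φ ≤ ⟪x i, what⟫ / ‖what‖ := fun i => hφ.1 ⟨i, rfl⟩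
  have hφ0 : 0 ≤ φ := by
    apply hφ.2
    rintro _ ⟨i, rfl⟩
    have h1 := hsep i
    positivity
  have hsqrt : Real.sqrt (∑ i, (a i) ^ 2) ≤ ∑ i, (-(a i)) := by
    have h1 : ∑ i, (a i) ^ 2 ≤ (∑ i, (-(a i))) ^ 2 := by
      have := Finset.sum_sq_le_sq_sum_of_nonneg
        (s := Finset.univ) (f := fun i => -(a i))
        (fun i _ => neg_nonneg.mpr (hai i))
      simpa using this
    calc Real.sqrt (∑ i, (a i) ^ 2) ≤ Real.sqrt ((∑ i, (-(a i))) ^ 2) :=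
          Real.sqrt_le_sqrt h1
      _ = ∑ i, (-(a i)) := by
          rw [Real.sqrt_sq (Finset.sum_nonneg fun i _ => by linarith [hai i])]
  have key : φ * ∑ i, (-(a i)) ≤ ⟪∑ i, a i • x i, -(‖what‖⁻¹ • what)⟫ := by
    rw [inner_neg_right, sum_inner, Finset.mul_sum, ← Finset.sum_neg_distrib]
    apply Finset.sum_le_sum
    intro i _
    rw [real_inner_smul_left, real_inner_smul_right]
    have h1 : φ ≤ ⟪x i, what⟫ / ‖what‖ := hφ_lb i
    have h2 : 0 ≤ -(a i) := by linarith [hai i]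
    have : (-(a i)) * φ ≤ (-(a i)) * (⟪x i, what⟫ / ‖what‖) :=
      mul_le_mul_of_nonneg_left h1 h2
    rw [div_eq_inv_mul] at this
    nlinarith [this]
  have cs : ⟪∑ i, a i • x i, -(‖what‖⁻¹ • what)⟫ ≤ ‖∑ i, a i • x i‖ := by
    have hnu : ‖-(‖what‖⁻¹ • what)‖ = 1 := by
      rw [norm_neg, norm_smul, norm_inv, norm_norm, inv_mul_cancel₀ (ne_of_gt hnorm)]
    calc ⟪∑ i, a i • x i, -(‖what‖⁻¹ • what)⟫
        ≤ ‖∑ i, a i • x i‖ * ‖-(‖what‖⁻¹ • what)‖ := real_inner_le_norm _ _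
      _ = ‖∑ i, a i • x i‖ := by rw [hnu, mul_one]
  calc φ * Real.sqrt (∑ i, (a i) ^ 2) ≤ φ * ∑ i, (-(a i)) :=
        mul_le_mul_of_nonneg_left hsqrt hφ0
    _ ≤ ‖∑ i, a i • x i‖ := le_trans key cs
end

section
/- Suppose ℓ: ℝ → ℝ₊ satisfies ℓ(u) ≥ G·max{0, −u} for some G > 0, and the data x_0,…,x_{N-1} ∈ ℝ^d satisfy the strict non-separability condition: b := min over unit vectors v of Σ_{i} max{0, −x_i^⊤ v} is strictly positive. Then the total loss L(w) = Σ_i ℓ(x_i^⊤ w) satisfies L(w) ≥ G·b·‖w‖ for all w ∈ ℝ^d; in particular L is coercive. -/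
open scoped RealInnerProductSpace BigOperators

/-- Under strict joint non-separability, the total loss grows at least linearly in
`‖w‖`; in particular it is coercive. -/
theorem nonseparable_loss_lower_bound
    {d N : ℕ} (hd : 0 < d)
    (x : Fin N → EuclideanSpace ℝ (Fin d))
    (ℓ : ℝ → ℝ) (hℓ : ∀ u, 0 ≤ ℓ u)
    (G : ℝ) (hG : 0 < G)
    (hℓG : ∀ u, G * max 0 (-u) ≤ ℓ u)
    (b : ℝ)
    (hb : IsLeast {r | ∃ v : EuclideanSpace ℝ (Fin d), ‖v‖ = 1 ∧
            r = ∑ i, max 0 (-⟪x i, v⟫)} b)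
    (hbpos : 0 < b) :
    (∀ w : EuclideanSpace ℝ (Fin d), G * b * ‖w‖ ≤ ∑ i, ℓ ⟪x i, w⟫) ∧
    (∀ C : ℝ, ∃ R : ℝ, ∀ w : EuclideanSpace ℝ (Fin d),
        R ≤ ‖w‖ → C ≤ ∑ i, ℓ ⟪x i, w⟫) := by
  have key : ∀ w : EuclideanSpace ℝ (Fin d), G * b * ‖w‖ ≤ ∑ i, ℓ ⟪x i, w⟫ := by
    intro w
    by_cases hw : w = 0
    · simp [hw]
      exact mul_nonneg (Nat.cast_nonneg N) (hℓ 0)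
    · have hwn : (0:ℝ) < ‖w‖ := norm_pos_iff.mpr hw
      set v : EuclideanSpace ℝ (Fin d) := (‖w‖)⁻¹ • w with hv
      have hvn : ‖v‖ = 1 := by
        rw [hv, norm_smul, norm_inv, norm_norm, inv_mul_cancel₀ hwn.ne']
      have hble : b ≤ ∑ i, max 0 (-⟪x i, v⟫) := hb.2 ⟨v, hvn, rfl⟩
      have hsum : ∀ i, ‖w‖ * max 0 (-⟪x i, v⟫) = max 0 (-⟪x i, w⟫) := by
        intro i
        rw [hv, real_inner_smul_right]
        rw [mul_max_of_nonneg _ _ hwn.le, mul_zero, mul_neg,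
          mul_inv_cancel_left₀ hwn.ne']
      calc G * b * ‖w‖ ≤ G * (∑ i, max 0 (-⟪x i, v⟫)) * ‖w‖ := by
            have := mul_le_mul_of_nonneg_left hble hG.le
            exact mul_le_mul_of_nonneg_right this hwn.le
        _ = ∑ i, G * max 0 (-⟪x i, w⟫) := by
            rw [mul_comm _ ‖w‖, ← mul_assoc, mul_comm ‖w‖ G, mul_assoc,
              Finset.mul_sum, Finset.mul_sum]
            exact Finset.sum_congr rfl fun i _ => by rw [hsum i]
        _ ≤ ∑ i, ℓ ⟪x i, w⟫ := Finset.sum_le_sum fun i _ => hℓG _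
  refine ⟨key, fun C => ⟨C / (G * b), fun w hw => ?_⟩⟩
  have hGb : 0 < G * b := mul_pos hG hbpos
  calc C = G * b * (C / (G * b)) := by field_simp
    _ ≤ G * b * ‖w‖ := mul_le_mul_of_nonneg_left hw hGb.le
    _ ≤ _ := key w
end

section
/- Let (r_k^{(t)}) be a doubly indexed family of vectors in ℝ^d for t ≥ t_1 and k ∈ [0, K], with r_K^{(t)} = r_0^{(t+1)}. Suppose (a) Σ_{t=t_1}^∞ Σ_{k=0}^{K-1} ‖r_{k+1}^{(t)} − r_k^{(t)}‖² < ∞, and (b) there exist C_1, C_2 > 0, θ > 1, μ̃ > 0 such that (r_{k+1}^{(t)} − r_k^{(t)})^⊤ r_k^{(t)} ≤ C_1 t^{−θ} + C_2 t^{−1−μ̃/2} for all t ≥ t_1 and k ∈ [0, K−1]. Then sup_{t,k} ‖r_k^{(t)}‖ < ∞. -/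
open scoped RealInnerProductSpace BigOperators

/-- Boundedness of the residual sequence: summable squared increments plus a
summable bound on the cross terms imply uniform boundedness. -/
theorem residual_boundedness
    {d : ℕ} (K t₁ : ℕ) (hK : 0 < K) (ht₁ : 1 ≤ t₁)
    (r : ℕ → ℕ → EuclideanSpace ℝ (Fin d))
    (hlink : ∀ t, t₁ ≤ t → r t K = r (t + 1) 0)
    (ha : Summable (fun t : ℕ =>
      ∑ k ∈ Finset.range K, ‖r (t₁ + t) (k + 1) - r (t₁ + t) k‖ ^ 2))
    (C₁ C₂ θ μ : ℝ) (hC₁ : 0 < C₁) (hC₂ : 0 < C₂) (hθ : 1 < θ) (hμ : 0 < μ)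
    (hb : ∀ t, t₁ ≤ t → ∀ k < K,
      ⟪r t (k + 1) - r t k, r t k⟫
        ≤ C₁ * (t : ℝ) ^ (-θ) + C₂ * (t : ℝ) ^ (-1 - μ / 2)) :
    ∃ B : ℝ, ∀ t, t₁ ≤ t → ∀ k ≤ K, ‖r t k‖ ≤ B := by
  classical
  set g : ℕ → ℕ → ℝ := fun t j =>
    2 * (C₁ * (t : ℝ) ^ (-θ) + C₂ * (t : ℝ) ^ (-1 - μ / 2)) +
      ‖r t (j + 1) - r t j‖ ^ 2 with hg
  have hgnn : ∀ t j, 0 ≤ g t j := by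
    intro t j
    have h1 : (0:ℝ) ≤ (t:ℝ) ^ (-θ) := Real.rpow_nonneg (Nat.cast_nonneg t) _
    have h2 : (0:ℝ) ≤ (t:ℝ) ^ (-1 - μ/2) := Real.rpow_nonneg (Nat.cast_nonneg t) _
    have h3 := sq_nonneg ‖r t (j+1) - r t j‖
    have h4 : 0 ≤ C₁ * (t:ℝ) ^ (-θ) := mul_nonneg hC₁.le h1
    have h5 : 0 ≤ C₂ * (t:ℝ) ^ (-1 - μ/2) := mul_nonneg hC₂.le h2
    simp only [hg]
    nlinarith
  -- one step bound
  have hstep : ∀ t, t₁ ≤ t → ∀ k, k < K →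
      ‖r t (k+1)‖ ^ 2 ≤ ‖r t k‖ ^ 2 + g t k := by
    intro t ht k hk
    have hxy : r t k + (r t (k+1) - r t k) = r t (k+1) := by abel
    have h := norm_add_sq_real (r t k) (r t (k+1) - r t k)
    rw [hxy] at h
    have hbb := hb t ht k hk
    have hcomm : ⟪r t k, r t (k+1) - r t k⟫ = ⟪r t (k+1) - r t k, r t k⟫ :=
      real_inner_comm _ _
    simp only [hg]
    nlinarith
  -- within a block
  have hpart : ∀ t, t₁ ≤ t → ∀ k, k ≤ K →
      ‖r t k‖ ^ 2 ≤ ‖r t 0‖ ^ 2 + ∑ j ∈ Finset.range k, g t j := by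
    intro t ht k hk
    induction k with
    | zero => simp
    | succ n ih =>
      have hn : n < K := hk
      have h1 := ih (Nat.le_of_succ_le hk)
      have h2 := hstep t ht n hn
      rw [Finset.sum_range_succ]
      linarith
  set G : ℕ → ℝ := fun u => ∑ j ∈ Finset.range K, g (t₁ + u) j with hGdef
  have hGnn : ∀ u, 0 ≤ G u := fun u => Finset.sum_nonneg fun j _ => hgnn _ _
  -- across blocks
  have hΦ : ∀ s, ‖r (t₁ + s) 0‖ ^ 2 ≤ ‖r t₁ 0‖ ^ 2 + ∑ u ∈ Finset.range s, G u := by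
    intro s
    induction s with
    | zero => simp
    | succ n ih =>
      have hlt : t₁ ≤ t₁ + n := Nat.le_add_right _ _
      have h1 := hpart (t₁ + n) hlt K le_rfl
      have h2 : r (t₁ + n) K = r (t₁ + n + 1) 0 := hlink _ hlt
      rw [Finset.sum_range_succ]
      have : ‖r (t₁ + (n+1)) 0‖ ^ 2 = ‖r (t₁ + n) K‖ ^ 2 := by
        rw [h2]; ring_nf
      rw [this]
      simp only [hGdef] at *
      linarith
  -- summability of G
  have hsum1 : Summable (fun u : ℕ => ((t₁ + u : ℕ) : ℝ) ^ (-θ)) := by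
    have h := Real.summable_nat_rpow.mpr (by linarith : -θ < -1)
    exact h.comp_injective (fun a b hab => by omega)
  have hsum2 : Summable (fun u : ℕ => ((t₁ + u : ℕ) : ℝ) ^ (-1 - μ/2)) := by
    have h := Real.summable_nat_rpow.mpr (by linarith : -1 - μ/2 < -1)
    exact h.comp_injective (fun a b hab => by omega)
  have hGeq : ∀ u, G u = (K : ℝ) * (2 * C₁) * ((t₁ + u : ℕ) : ℝ) ^ (-θ)
      + (K : ℝ) * (2 * C₂) * ((t₁ + u : ℕ) : ℝ) ^ (-1 - μ/2)
      + ∑ j ∈ Finset.range K, ‖r (t₁ + u) (j + 1) - r (t₁ + u) j‖ ^ 2 := by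
    intro u
    simp only [hGdef, hg, Finset.sum_add_distrib, Finset.sum_const,
      Finset.card_range, nsmul_eq_mul]
    ring
  have hGsum : Summable G := by
    rw [funext hGeq]
    exact ((hsum1.mul_left _).add (hsum2.mul_left _)).add ha
  set T : ℝ := ∑' u, G u with hT
  have hTnn : 0 ≤ T := tsum_nonneg hGnn
  refine ⟨Real.sqrt (‖r t₁ 0‖ ^ 2 + 2 * T), ?_⟩
  intro t ht k hk
  have hts : t = t₁ + (t - t₁) := by omega
  have h1 := hpart t ht k hk
  have h2 : ∑ j ∈ Finset.range k, g t j ≤ ∑ j ∈ Finset.range K, g t j :=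
    Finset.sum_le_sum_of_subset_of_nonneg (Finset.range_subset_range.mpr hk)
      (fun j _ _ => hgnn _ _)
  have h3 : ∑ j ∈ Finset.range K, g t j = G (t - t₁) := by
    simp only [hGdef]; rw [← hts]
  have h4 : G (t - t₁) ≤ T :=
    Summable.le_tsum hGsum _ (fun j _ => hGnn j)
  have h5 : ‖r t 0‖ ^ 2 ≤ ‖r t₁ 0‖ ^ 2 + ∑ u ∈ Finset.range (t - t₁), G u := by
    have := hΦ (t - t₁); rwa [← hts] at this
  have h6 : ∑ u ∈ Finset.range (t - t₁), G u ≤ T :=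
    Summable.sum_le_tsum _ (fun j _ => hGnn j) hGsum
  have hsq : ‖r t k‖ ^ 2 ≤ ‖r t₁ 0‖ ^ 2 + 2 * T := by linarith
  calc ‖r t k‖ = Real.sqrt (‖r t k‖ ^ 2) := (Real.sqrt_sq (norm_nonneg _)).symm
    _ ≤ Real.sqrt (‖r t₁ 0‖ ^ 2 + 2 * T) := Real.sqrt_le_sqrt hsq
end
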